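/- Let U ⊆ E be open in a finite-dimensional real normed space, L : U → (E →L[ℝ] E) a smooth field of operators, μ, ν : U → ℝ smooth with μ(x) ≠ ν(x) for all x ∈ U, and X, Y smooth vector fields with L(x)X(x) = μ(x)X(x) and L(x)Y(x) = ν(x)Y(x) for all x. If H_L(X,Y) = 0 on U, then at every x ∈ U the bracket satisfies [X,Y](x) ∈ ker(L(x) − μ(x)I)² + ker(L(x) − ν(x)I)². (Paper: Lemma 3.7 / Proposition 3.8 specialized to proper eigenvector fields with distinct eigenvalues.) -/

import Mathlib

variable {E : Type*} [NormedAddCommGroup E] [NormedSpace ℝ E]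

/-- Lie bracket of vector fields on a normed space:
`[X,Y](x) = (fderiv Y x)(X x) − (fderiv X x)(Y x)`. -/
noncomputable def lieBracket (X Y : E → E) : E → E :=
  fun x => fderiv ℝ Y x (X x) - fderiv ℝ X x (Y x)

/-- The vector field `LX : x ↦ L(x)(X(x))`. -/
noncomputable def opVec (L : E → (E →L[ℝ] E)) (X : E → E) : E → E :=
  fun x => L x (X x)

/-- Nijenhuis torsion of a field of operators:
`T_L(X,Y) = L²[X,Y] + [LX,LY] − L([X,LY] + [LX,Y])`. -/
noncomputable def nijenhuisTorsion (L : E → (E →L[ℝ] E)) (X Y : E → E) : E → E :=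
  fun x =>
    L x (L x (lieBracket X Y x)) + lieBracket (opVec L X) (opVec L Y) x
      - L x (lieBracket X (opVec L Y) x + lieBracket (opVec L X) Y x)

/-- Haantjes tensor of a field of operators:
`H_L(X,Y) = L²T_L(X,Y) + T_L(LX,LY) − L(T_L(X,LY) + T_L(LX,Y))`. -/
noncomputable def haantjesTensor (L : E → (E →L[ℝ] E)) (X Y : E → E) : E → E :=
  fun x =>
    L x (L x (nijenhuisTorsion L X Y x)) + nijenhuisTorsion L (opVec L X) (opVec L Y) x
      - L x (nijenhuisTorsion L X (opVec L Y) x + nijenhuisTorsion L (opVec L X) Y x)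

/-!
On eigenvector fields `LX = μX`, `LY = νY` the operator field acts by scalars, and the Nijenhuis
torsion is tensorial (`T_L(fX, Y) = f T_L(X, Y)`), so `H_L(X,Y) = (L - μ)(L - ν) T_L(X,Y)`.
Computing the torsion directly gives `T_L(X,Y) = (L - μ)(L - ν)[X,Y]` modulo `span{X, Y}`, which
`(L - μ)(L - ν)` annihilates. Hence `H_L(X,Y) = (L - μ)²(L - ν)²[X,Y]`, and as `(t - μ)²` and
`(t - ν)²` are coprime for `μ ≠ ν`, the kernel of this product is the sum of the two kernels.
-/

open Filter Topology

section LieBracket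

variable {X X' Y Y' : E → E} {f : E → ℝ} {x : E}

lemma lieBracket_congr_of_eventuallyEq (hX : X =ᶠ[𝓝 x] X') (hY : Y =ᶠ[𝓝 x] Y') :
    lieBracket X Y x = lieBracket X' Y' x := by
  simp only [lieBracket, hX.fderiv_eq, hY.fderiv_eq, hX.eq_of_nhds, hY.eq_of_nhds]

lemma lieBracket_swap (X Y : E → E) : lieBracket Y X = -lieBracket X Y := by
  ext x
  simp only [lieBracket, Pi.neg_apply, neg_sub]

lemma lieBracket_smul_left (hf : DifferentiableAt ℝ f x) (hX : DifferentiableAt ℝ X x) :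
    lieBracket (fun y => f y • X y) Y x = f x • lieBracket X Y x - fderiv ℝ f x (Y x) • X x := by
  simp only [lieBracket, map_smul, fderiv_fun_smul hf hX, add_apply, smul_apply,
    ContinuousLinearMap.smulRight_apply]
  module

lemma lieBracket_smul_right (hf : DifferentiableAt ℝ f x) (hY : DifferentiableAt ℝ Y x) :
    lieBracket X (fun y => f y • Y y) x = f x • lieBracket X Y x + fderiv ℝ f x (X x) • Y x := by
  simp only [lieBracket, map_smul, fderiv_fun_smul hf hY, add_apply, smul_apply,
    ContinuousLinearMap.smulRight_apply]
  module

end LieBracket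

section Torsion

variable {L : E → (E →L[ℝ] E)} {X X' Y Y' : E → E} {f μ ν : E → ℝ} {x : E}

lemma opVec_congr_of_eventuallyEq (hX : X =ᶠ[𝓝 x] X') : opVec L X =ᶠ[𝓝 x] opVec L X' :=
  hX.mono fun y hy => by simp only [opVec, hy]

lemma opVec_smul (L : E → (E →L[ℝ] E)) (f : E → ℝ) (X : E → E) :
    opVec L (fun y => f y • X y) = fun y => f y • opVec L X y := by
  ext y
  simp only [opVec, map_smul]

lemma nijenhuisTorsion_congr_of_eventuallyEq (hX : X =ᶠ[𝓝 x] X') (hY : Y =ᶠ[𝓝 x] Y') :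
    nijenhuisTorsion L X Y x = nijenhuisTorsion L X' Y' x := by
  have hLX := opVec_congr_of_eventuallyEq (L := L) hX
  have hLY := opVec_congr_of_eventuallyEq (L := L) hY
  simp only [nijenhuisTorsion, lieBracket_congr_of_eventuallyEq hX hY,
    lieBracket_congr_of_eventuallyEq hLX hLY, lieBracket_congr_of_eventuallyEq hX hLY,
    lieBracket_congr_of_eventuallyEq hLX hY]

lemma nijenhuisTorsion_swap (L : E → (E →L[ℝ] E)) (X Y : E → E) :
    nijenhuisTorsion L Y X = -nijenhuisTorsion L X Y := by
  ext x
  simp only [nijenhuisTorsion, lieBracket_swap Y, lieBracket_swap (opVec L Y), Pi.neg_apply,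
    map_neg, map_add]
  abel

lemma nijenhuisTorsion_smul_left (hf : DifferentiableAt ℝ f x) (hX : DifferentiableAt ℝ X x)
    (hLX : DifferentiableAt ℝ (opVec L X) x) :
    nijenhuisTorsion L (fun y => f y • X y) Y x = f x • nijenhuisTorsion L X Y x := by
  simp only [nijenhuisTorsion, opVec_smul, lieBracket_smul_left hf hX,
    lieBracket_smul_left hf hLX]
  simp only [map_sub, map_add, map_smul, opVec]
  module

lemma nijenhuisTorsion_smul_right (hf : DifferentiableAt ℝ f x) (hY : DifferentiableAt ℝ Y x)
    (hLY : DifferentiableAt ℝ (opVec L Y) x) :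
    nijenhuisTorsion L X (fun y => f y • Y y) x = f x • nijenhuisTorsion L X Y x := by
  rw [nijenhuisTorsion_swap, Pi.neg_apply, nijenhuisTorsion_smul_left hf hY hLY,
    nijenhuisTorsion_swap, Pi.neg_apply, smul_neg, neg_neg]

lemma nijenhuisTorsion_eq_of_eigen (hμ : DifferentiableAt ℝ μ x) (hν : DifferentiableAt ℝ ν x)
    (hX : DifferentiableAt ℝ X x) (hY : DifferentiableAt ℝ Y x)
    (hXe : opVec L X =ᶠ[𝓝 x] fun y => μ y • X y) (hYe : opVec L Y =ᶠ[𝓝 x] fun y => ν y • Y y) :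
    nijenhuisTorsion L X Y x =
      (L x - μ x • 1) ((L x - ν x • 1) (lieBracket X Y x))
        + (μ x - ν x) • (fderiv ℝ ν x (X x) • Y x + fderiv ℝ μ x (Y x) • X x) := by
  have hLX : L x (X x) = μ x • X x := hXe.eq_of_nhds
  have hLY : L x (Y x) = ν x • Y x := hYe.eq_of_nhds
  simp only [nijenhuisTorsion, lieBracket_congr_of_eventuallyEq hXe hYe,
    lieBracket_congr_of_eventuallyEq (EventuallyEq.refl _ X) hYe,
    lieBracket_congr_of_eventuallyEq hXe (EventuallyEq.refl _ Y),
    lieBracket_smul_left hμ hX, lieBracket_smul_right hν hY]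
  simp only [map_add, map_sub, map_smul, sub_apply, smul_apply, one_apply_eq_self, hLX, hLY]
  module

lemma haantjesTensor_eq_torsion_of_eigen
    (hμ : DifferentiableAt ℝ μ x) (hν : DifferentiableAt ℝ ν x)
    (hX : DifferentiableAt ℝ X x) (hY : DifferentiableAt ℝ Y x)
    (hXe : opVec L X =ᶠ[𝓝 x] fun y => μ y • X y) (hYe : opVec L Y =ᶠ[𝓝 x] fun y => ν y • Y y) :
    haantjesTensor L X Y x = (L x - μ x • 1) ((L x - ν x • 1) (nijenhuisTorsion L X Y x)) := by
  have hLX : DifferentiableAt ℝ (opVec L X) x := (hμ.smul hX).congr_of_eventuallyEq hXe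
  have hLY : DifferentiableAt ℝ (opVec L Y) x := (hν.smul hY).congr_of_eventuallyEq hYe
  simp only [haantjesTensor, nijenhuisTorsion_congr_of_eventuallyEq hXe hYe,
    nijenhuisTorsion_congr_of_eventuallyEq (EventuallyEq.refl _ X) hYe,
    nijenhuisTorsion_congr_of_eventuallyEq hXe (EventuallyEq.refl _ Y),
    nijenhuisTorsion_smul_left hμ hX hLX, nijenhuisTorsion_smul_right hν hY hLY]
  simp only [map_add, map_sub, map_smul, sub_apply, smul_apply, one_apply_eq_self]
  module

lemma haantjesTensor_eq_lieBracket_of_eigen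
    (hμ : DifferentiableAt ℝ μ x) (hν : DifferentiableAt ℝ ν x)
    (hX : DifferentiableAt ℝ X x) (hY : DifferentiableAt ℝ Y x)
    (hXe : opVec L X =ᶠ[𝓝 x] fun y => μ y • X y) (hYe : opVec L Y =ᶠ[𝓝 x] fun y => ν y • Y y) :
    haantjesTensor L X Y x =
      ((L x - μ x • 1) ^ 2 * (L x - ν x • 1) ^ 2 : E →L[ℝ] E) (lieBracket X Y x) := by
  have hLX : L x (X x) = μ x • X x := hXe.eq_of_nhds
  have hLY : L x (Y x) = ν x • Y x := hYe.eq_of_nhds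
  rw [haantjesTensor_eq_torsion_of_eigen hμ hν hX hY hXe hYe,
    nijenhuisTorsion_eq_of_eigen hμ hν hX hY hXe hYe]
  simp only [pow_two, mul_apply_eq_comp, map_add, map_sub, map_smul, sub_apply, smul_apply,
    one_apply_eq_self, hLX, hLY]
  module

end Torsion

theorem Module.End.ker_pow_sup_ker_pow_of_isUnit_sub {R M : Type*}
    [CommRing R] [AddCommGroup M] [Module R M]
    (f : Module.End R M) {a b : R} (hab : IsUnit (a - b)) (m n : ℕ) :
    LinearMap.ker ((f - a • 1) ^ m) ⊔ LinearMap.ker ((f - b • 1) ^ n)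
      = LinearMap.ker ((f - a • 1) ^ m * (f - b • 1) ^ n) := by
  simpa [Algebra.algebraMap_eq_smul_one] using Polynomial.sup_ker_aeval_eq_ker_aeval_mul_of_coprime
    f ((Polynomial.isCoprime_X_sub_C_of_isUnit_sub hab).pow (m := m) (n := n))

theorem bracket_mem_sum_generalized_eigenspaces_general {E : Type*}
    [NormedAddCommGroup E] [NormedSpace ℝ E]
    (U : Set E) (hU : IsOpen U)
    (L : E → (E →L[ℝ] E))
    (μ ν : E → ℝ) (hμ : ContDiffOn ℝ (⊤ : ℕ∞) μ U) (hν : ContDiffOn ℝ (⊤ : ℕ∞) ν U)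
    (hμν : ∀ x ∈ U, μ x ≠ ν x)
    (X Y : E → E) (hX : ContDiffOn ℝ (⊤ : ℕ∞) X U) (hY : ContDiffOn ℝ (⊤ : ℕ∞) Y U)
    (hXeig : ∀ x ∈ U, L x (X x) = μ x • X x)
    (hYeig : ∀ x ∈ U, L x (Y x) = ν x • Y x)
    (hHaan : ∀ x ∈ U, haantjesTensor L X Y x = 0) :
    ∀ x ∈ U,
      lieBracket X Y x ∈
        LinearMap.ker (((L x - μ x • (1 : E →L[ℝ] E)) ^ 2 : E →L[ℝ] E) : E →ₗ[ℝ] E)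
          ⊔ LinearMap.ker (((L x - ν x • (1 : E →L[ℝ] E)) ^ 2 : E →L[ℝ] E) : E →ₗ[ℝ] E) := by
  intro x hx
  have hxU : U ∈ 𝓝 x := hU.mem_nhds hx
  have hdiff {g : E → ℝ} (hg : ContDiffOn ℝ (⊤ : ℕ∞) g U) : DifferentiableAt ℝ g x :=
    (hg.differentiableOn (by simp)).differentiableAt hxU
  have hdiffV {V : E → E} (hV : ContDiffOn ℝ (⊤ : ℕ∞) V U) : DifferentiableAt ℝ V x :=
    (hV.differentiableOn (by simp)).differentiableAt hxU
  have hXe : opVec L X =ᶠ[𝓝 x] fun y => μ y • X y := eventually_of_mem hxU hXeig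
  have hYe : opVec L Y =ᶠ[𝓝 x] fun y => ν y • Y y := eventually_of_mem hxU hYeig
  have hH := hHaan x hx
  rw [haantjesTensor_eq_lieBracket_of_eigen (hdiff hμ) (hdiff hν) (hdiffV hX) (hdiffV hY)
    hXe hYe] at hH
  replace hH : (((L x - μ x • 1) ^ 2 * (L x - ν x • 1) ^ 2 : E →L[ℝ] E) : E →ₗ[ℝ] E)
      (lieBracket X Y x) = 0 := hH
  simp only [ContinuousLinearMap.toLinearMap_mul, ContinuousLinearMap.toLinearMap_pow,
    ContinuousLinearMap.toLinearMap_sub, ContinuousLinearMap.toLinearMap_smul,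
    ContinuousLinearMap.toLinearMap_one] at hH ⊢
  rw [Module.End.ker_pow_sup_ker_pow_of_isUnit_sub _ (sub_ne_zero.2 (hμν x hx)).isUnit]
  exact hH

/-- Paper, Lemma 3.7 / Proposition 3.8, proper eigenvector fields with
distinct eigenvalues: if `LX = μX`, `LY = νY` with `μ(x) ≠ ν(x)` on `U` and the Haantjes
tensor `H_L(X,Y)` vanishes on `U`, then at every `x ∈ U`
`[X,Y](x) ∈ ker(L(x) − μ(x)I)² + ker(L(x) − ν(x)I)²`. -/
theorem bracket_mem_sum_generalized_eigenspaces {E : Type*}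
    [NormedAddCommGroup E] [NormedSpace ℝ E] [FiniteDimensional ℝ E]
    (U : Set E) (hU : IsOpen U)
    (L : E → (E →L[ℝ] E)) (hL : ContDiffOn ℝ (⊤ : ℕ∞) L U)
    (μ ν : E → ℝ) (hμ : ContDiffOn ℝ (⊤ : ℕ∞) μ U) (hν : ContDiffOn ℝ (⊤ : ℕ∞) ν U)
    (hμν : ∀ x ∈ U, μ x ≠ ν x)
    (X Y : E → E) (hX : ContDiffOn ℝ (⊤ : ℕ∞) X U) (hY : ContDiffOn ℝ (⊤ : ℕ∞) Y U)
    (hXeig : ∀ x ∈ U, L x (X x) = μ x • X x)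
    (hYeig : ∀ x ∈ U, L x (Y x) = ν x • Y x)
    (hHaan : ∀ x ∈ U, haantjesTensor L X Y x = 0) :
    ∀ x ∈ U,
      lieBracket X Y x ∈
        LinearMap.ker (((L x - μ x • (1 : E →L[ℝ] E)) ^ 2 : E →L[ℝ] E) : E →ₗ[ℝ] E)
          ⊔ LinearMap.ker (((L x - ν x • (1 : E →L[ℝ] E)) ^ 2 : E →L[ℝ] E) : E →ₗ[ℝ] E) :=
  bracket_mem_sum_generalized_eigenspaces_general U hU L μ ν hμ hν hμν X Y hX hY hXeig hYeig hHaan
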